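/- Let S be an additively reduced and additively Furstenberg semidomain with A₊(S) = S^×, and let G be a linearly ordered torsion-free abelian group in which every bounded-below subset is well-ordered. Then every f ∈ S⟦G⟧ with |supp(f)| > 1 can be expressed as the sum of at most three irreducible elements of S⟦G⟧. -/

import Mathlib

/-- Witness that `S` is a semidomain: an injective semiring hom into an integral domain. -/
structure SemidomainWitness (S : Type*) [CommSemiring S] where
  D : Type
  [commRing : CommRing D]
  [isDomain : IsDomain D]
  emb : S →+* D
  inj : Function.Injective emb

/-- `S` is a semidomain, i.e. (isomorphic to) a subsemiring of an integral domain. -/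
def IsSemidomain (S : Type*) [CommSemiring S] : Prop := Nonempty (SemidomainWitness S)

/-- `S` is additively reduced: `0` is the only additively invertible element. -/
def AddReduced (S : Type*) [AddZeroClass S] : Prop := ∀ a b : S, a + b = 0 → a = 0

/-- `s` is an atom of the additive monoid `(S, +)` (for `S` additively reduced):
it is nonzero and cannot be written as a sum of two nonzero elements. -/
def IsAddAtom {S : Type*} [AddZeroClass S] (s : S) : Prop :=
  s ≠ 0 ∧ ∀ a b : S, s = a + b → a = 0 ∨ b = 0

/-- `S` is additively Furstenberg: every nonzero element is divisible in `(S, +)`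
by an additive atom. -/
def AddFurstenberg (S : Type*) [AddZeroClass S] : Prop :=
  ∀ s : S, s ≠ 0 → ∃ a t : S, IsAddAtom a ∧ s = a + t


section Series
variable {S : Type*} [CommSemiring S] {G : Type*} [AddCommGroup G] [LinearOrder G] [IsOrderedAddMonoid G]

/-- `f` belongs to the group series semidomain `S⟦G⟧`: its support is contained in the range
of a strictly increasing sequence of exponents, so `f` is a formal sum `∑_{i=0}^∞ s_i x^{g_i}`. -/
def InSeries (f : HahnSeries G S) : Prop :=
  ∃ g : ℕ → G, StrictMono g ∧ f.support ⊆ Set.range g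

/-- A monomial `s·x^g` in `S⟦G⟧`. -/
def IsMonomialSeries (f : HahnSeries G S) : Prop :=
  ∃ (g : G) (s : S), f = HahnSeries.single g s

/-- `f` is monolithic in `S⟦G⟧`: every factorization of `f` within `S⟦G⟧` has a
monomial factor. -/
def MonolithicSeries (f : HahnSeries G S) : Prop :=
  f ≠ 0 ∧ ∀ p q : HahnSeries G S, InSeries p → InSeries q → f = p * q →
    IsMonomialSeries p ∨ IsMonomialSeries q

/-- `f` is a unit of the semidomain `S⟦G⟧`. -/
def IsUnitSeries (f : HahnSeries G S) : Prop :=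
  InSeries f ∧ ∃ h : HahnSeries G S, InSeries h ∧ f * h = 1

/-- `f` is irreducible in the multiplicative monoid of nonzero elements of `S⟦G⟧`. -/
def IrreducibleSeries (f : HahnSeries G S) : Prop :=
  InSeries f ∧ f ≠ 0 ∧ ¬ IsUnitSeries f ∧
    ∀ p q : HahnSeries G S, InSeries p → InSeries q → f = p * q →
      IsUnitSeries p ∨ IsUnitSeries q

end Series

/-!
Let `e₀ < e₁` be the two smallest exponents of `f` and `d = e₁ - e₀`. A series with a unit
coefficient is irreducible as soon as its two smallest exponents `m₀ < m₁` satisfy: no two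
exponents above `m₁` are at distance `m₁ - m₀`, and either the coefficient at `m₁` is an additive
atom or `m₁ + (m₁ - m₀)` is not an exponent. Indeed, if it were a product of two non-monomials with
smallest exponents `a₀ < a₁` and `b₀ < b₁`, say `a₀ + b₁ ≤ a₁ + b₀`, then `m₁ = a₀ + b₁`, and
`a₁ + b₀`, `a₁ + b₁` are exponents at distance `m₁ - m₀`; when `a₁ + b₀ = m₁` the coefficient at
`m₁` has two nonzero contributions, so is not an atom, since `S` has no zero divisors and is
additively reduced. A monomial factor must be a unit because of the unit coefficient.

Colour the exponents `y > e₁` of `f` by the parity of the length of the longest chain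
`y - d, y - 2d, …` of exponents above `e₁`; a colour class never contains `x` and `x + d`.
Splitting `f` along the two colours, after moving the two lowest terms and, by the Furstenberg
property, peeling unit summands off one or two coefficients, produces one or two series of the
shape above.
-/

open HahnSeries

theorem IsSemidomain.noZeroDivisors {S : Type*} [CommSemiring S] (hS : IsSemidomain S) :
    NoZeroDivisors S := by
  obtain ⟨W⟩ := hS
  let _ := W.commRing
  have _ := W.isDomain
  exact W.inj.noZeroDivisors W.emb (map_zero _) (map_mul _)

namespace AddReduced

variable {M : Type*} [AddCommMonoid M]

theorem sum_ne_zero (hred : AddReduced M) {ι : Type*} {s : Finset ι} {F : ι → M} {i : ι}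
    (hi : i ∈ s) (hFi : F i ≠ 0) : ∑ j ∈ s, F j ≠ 0 := by
  classical
  rw [← Finset.add_sum_erase s F hi]
  exact fun h => hFi (hred _ _ h)

theorem not_isAddAtom_sum (hred : AddReduced M) {ι : Type*} {s : Finset ι} {F : ι → M}
    {i j : ι} (hi : i ∈ s) (hj : j ∈ s) (hij : i ≠ j) (hFi : F i ≠ 0) (hFj : F j ≠ 0) :
    ¬IsAddAtom (∑ k ∈ s, F k) := by
  classical
  rintro ⟨-, hatom⟩
  rcases hatom _ _ (Finset.add_sum_erase s F hi).symm with h | h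
  · exact hFi h
  · exact hred.sum_ne_zero (Finset.mem_erase.2 ⟨hij.symm, hj⟩) hFj h

end AddReduced

section Coefficients

variable {S : Type*} [CommSemiring S]

theorem exists_isUnit_add (hfur : AddFurstenberg S) (hatoms : ∀ a : S, IsAddAtom a → IsUnit a)
    {c : S} (hc : c ≠ 0) : ∃ u t : S, IsUnit u ∧ c = u + t := by
  obtain ⟨a, t, ha, rfl⟩ := hfur c hc
  exact ⟨a, t, hatoms a ha, rfl⟩

theorem exists_isUnit_add_ne_zero (hred : AddReduced S) (hfur : AddFurstenberg S)
    (hatoms : ∀ a : S, IsAddAtom a → IsUnit a) {c : S} (hc : c ≠ 0) (hcu : ¬IsUnit c) :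
    ∃ u t : S, IsUnit u ∧ t ≠ 0 ∧ c = u + t := by
  obtain ⟨a, b, rfl, ha, hb⟩ : ∃ a b : S, c = a + b ∧ a ≠ 0 ∧ b ≠ 0 := by
    by_contra! h
    exact hcu (hatoms c ⟨hc, fun a b hab => or_iff_not_imp_left.2 (h a b hab)⟩)
  obtain ⟨u, t, hu, rfl⟩ := exists_isUnit_add hfur hatoms ha
  exact ⟨u, t + b, hu, fun h => hb (hred b t (by rwa [add_comm] at h)), add_assoc u t b⟩

end Coefficients

structure IsLowestPair {α : Type*} [Preorder α] (s : Set α) (a₀ a₁ : α) : Prop where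
  left_mem : a₀ ∈ s
  right_mem : a₁ ∈ s
  lt : a₀ < a₁
  le_of_ne : ∀ x ∈ s, x ≠ a₀ → a₁ ≤ x

namespace IsLowestPair

variable {α : Type*} [LinearOrder α] {s W : Set α} {a₀ a₁ x : α}

theorem le (h : IsLowestPair s a₀ a₁) (hx : x ∈ s) : a₀ ≤ x := by
  by_cases hx₀ : x = a₀
  · exact hx₀.ge
  · exact h.lt.le.trans (h.le_of_ne x hx hx₀)

theorem of_subset_insert (h₀ : a₀ ∈ s) (h₁ : a₁ ∈ s) (hlt : a₀ < a₁)
    (hs : s ⊆ insert a₀ (insert a₁ W)) (hW : ∀ y ∈ W, a₁ < y) : IsLowestPair s a₀ a₁ := by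
  refine ⟨h₀, h₁, hlt, fun x hx hx₀ => ?_⟩
  rcases hs hx with rfl | rfl | hxW
  · exact absurd rfl hx₀
  · exact le_rfl
  · exact (hW x hxW).le

end IsLowestPair

theorem Set.IsWF.exists_isLowestPair {α : Type*} [LinearOrder α] {s : Set α} (hs : s.IsWF)
    (hnt : s.Nontrivial) : ∃ a₀ a₁, IsLowestPair s a₀ a₁ := by
  have hne : (s \ {hs.min hnt.nonempty}).Nonempty := hnt.exists_ne _
  have hs' : (s \ {hs.min hnt.nonempty}).IsWF := hs.mono Set.sdiff_subset
  have h₁ := hs'.min_mem hne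
  refine ⟨_, _, ⟨hs.min_mem hnt.nonempty, h₁.1, ?_, fun x hx hx₀ => hs'.min_le hne ⟨hx, hx₀⟩⟩⟩
  exact lt_of_le_of_ne (hs.min_le _ h₁.1) (Ne.symm h₁.2)

namespace HahnSeries

section Restrict

variable {Γ R : Type*} [PartialOrder Γ]

noncomputable def restrict [Zero R] (f : HahnSeries Γ R) (s : Set Γ) : HahnSeries Γ R where
  coeff := s.indicator f.coeff
  isPWO_support' :=
    f.isPWO_support.mono (Set.support_indicator.trans_subset Set.inter_subset_right)

section Zero

variable [Zero R] {f : HahnSeries Γ R} {s : Set Γ}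

@[simp]
theorem coeff_restrict : (f.restrict s).coeff = s.indicator f.coeff := rfl

theorem support_restrict_subset : (f.restrict s).support ⊆ s :=
  Set.support_indicator.trans_subset Set.inter_subset_left

theorem restrict_eq_self (h : f.support ⊆ s) : f.restrict s = f :=
  HahnSeries.ext (Set.indicator_eq_self.2 h)

@[simp]
theorem restrict_empty : f.restrict ∅ = 0 := HahnSeries.ext (Set.indicator_empty _)

theorem restrict_singleton (a : Γ) : f.restrict {a} = single a (f.coeff a) := by
  ext g
  by_cases hg : g = a
  · subst hg; simp
  · simp [hg]

end Zero

variable [AddMonoid R] {f : HahnSeries Γ R} {s t : Set Γ}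

theorem restrict_union (h : Disjoint s t) : f.restrict (s ∪ t) = f.restrict s + f.restrict t :=
  HahnSeries.ext (Set.indicator_union_of_disjoint h f.coeff)

theorem restrict_eq_single_add_restrict_diff {a : Γ} (ha : a ∈ s) :
    f.restrict s = single a (f.coeff a) + f.restrict (s \ {a}) := by
  rw [← restrict_singleton, ← restrict_union Set.disjoint_sdiff_right,
    Set.union_sdiff_cancel (Set.singleton_subset_iff.2 ha)]

theorem support_single_add_restrict_diff_subset {a : Γ} (ha : a ∈ s) (r : R) :
    (single a r + f.restrict (s \ {a})).support ⊆ s :=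
  (support_add_subset _ _).trans <| Set.union_subset
    (support_single_subset.trans (Set.singleton_subset_iff.2 ha))
    (support_restrict_subset.trans Set.sdiff_subset)

end Restrict

end HahnSeries

theorem IsLowestPair.eq_single_add_single_add_restrict {Γ R : Type*} [LinearOrder Γ] [AddMonoid R]
    {f : HahnSeries Γ R} {e₀ e₁ : Γ} (hlow : IsLowestPair f.support e₀ e₁) :
    f = single e₀ (f.coeff e₀) + single e₁ (f.coeff e₁) + f.restrict (f.support ∩ Set.Ioi e₁) := by
  have hsub : f.support ⊆ {e₀} ∪ ({e₁} ∪ (f.support ∩ Set.Ioi e₁)) := by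
    intro x hx
    by_cases hx₀ : x = e₀
    · exact Or.inl hx₀
    by_cases hx₁ : x = e₁
    · exact Or.inr (Or.inl hx₁)
    exact Or.inr (Or.inr ⟨hx, lt_of_le_of_ne (hlow.le_of_ne x hx hx₀) (Ne.symm hx₁)⟩)
  have h₀ : Disjoint {e₀} ({e₁} ∪ (f.support ∩ Set.Ioi e₁)) := by
    refine Set.disjoint_singleton_left.2 ?_
    rintro (h | ⟨-, h⟩)
    exacts [hlow.lt.ne h, lt_asymm hlow.lt h]
  have h₁ : Disjoint {e₁} (f.support ∩ Set.Ioi e₁) :=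
    Set.disjoint_singleton_left.2 fun h => lt_irrefl e₁ h.2
  conv_lhs => rw [← restrict_eq_self hsub, restrict_union h₀, restrict_union h₁]
  rw [restrict_singleton, restrict_singleton, add_assoc]

section Parity

variable {G : Type*} [AddCommGroup G]

/-- The number of consecutive points `y - d, y - 2d, …` lying in `T`. -/
noncomputable def runLength (T : Set G) (d y : G) : ℕ := sInf {n : ℕ | y - (n + 1) • d ∉ T}

def evenPart (T : Set G) (d : G) : Set G := {y ∈ T | Even (runLength T d y)}

def oddPart (T : Set G) (d : G) : Set G := {y ∈ T | Odd (runLength T d y)}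

variable {T : Set G} {d x y : G}

theorem runLength_eq_zero (h : y - d ∉ T) : runLength T d y = 0 :=
  Nat.sInf_eq_zero.2 (Or.inl (by simpa using h))

theorem sub_mem_of_runLength_ne_zero (h : runLength T d y ≠ 0) : y - d ∈ T :=
  not_not.1 (mt runLength_eq_zero h)

theorem evenPart_subset : evenPart T d ⊆ T := fun _ hy => hy.1

theorem oddPart_subset : oddPart T d ⊆ T := fun _ hy => hy.1

theorem evenPart_union_oddPart : evenPart T d ∪ oddPart T d = T := by
  ext y
  simp only [evenPart, oddPart, Set.mem_union, Set.mem_ofPred_eq, ← and_or_left,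
    Nat.even_or_odd, and_true]

theorem disjoint_evenPart_oddPart : Disjoint (evenPart T d) (oddPart T d) :=
  Set.disjoint_left.2 fun _ he ho => Nat.not_even_iff_odd.2 ho.2 he.2

theorem mem_evenPart_of_sub_notMem (hy : y ∈ T) (h : y - d ∉ T) : y ∈ evenPart T d :=
  ⟨hy, by simp [runLength_eq_zero h]⟩

theorem sub_mem_of_mem_oddPart (hy : y ∈ oddPart T d) : y - d ∈ T :=
  sub_mem_of_runLength_ne_zero hy.2.pos.ne'

variable [LinearOrder G] [IsOrderedAddMonoid G]

theorem runLength_add_self (hT : T.IsWF) (hd : 0 < d) (hx : x ∈ T) :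
    runLength T d (x + d) = runLength T d x + 1 := by
  have hshift : ∀ n : ℕ, x + d - (n + 1) • d = x - n • d := fun n => by rw [succ_nsmul]; abel
  have hne : {n : ℕ | x - n • d ∉ T}.Nonempty := by
    by_contra! h
    refine Set.isWF_iff_no_descending_seq.1 hT (fun n => x - n • d)
      (fun m n hmn => sub_lt_sub_left (nsmul_lt_nsmul_left hd hmn) x) fun n => ?_
    simpa using Set.eq_empty_iff_forall_notMem.1 h n
  simp only [runLength, hshift]
  refine (Nat.sInf_add (p := fun n => x - n • d ∉ T) ?_).symm
  refine Nat.one_le_iff_ne_zero.2 fun h => ?_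
  rcases Nat.sInf_eq_zero.1 h with h | h
  · exact h (by simpa using hx)
  · exact hne.ne_empty h

theorem add_notMem_evenPart (hT : T.IsWF) (hd : 0 < d) (hx : x ∈ evenPart T d) :
    x + d ∉ evenPart T d := fun h => by
  have := h.2
  rw [runLength_add_self hT hd hx.1, Nat.even_add_one] at this
  exact this hx.2

theorem add_notMem_oddPart (hT : T.IsWF) (hd : 0 < d) (hx : x ∈ oddPart T d) :
    x + d ∉ oddPart T d := fun h => by
  have := h.2
  rw [runLength_add_self hT hd hx.1, Nat.odd_add_one] at this
  exact this hx.2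

theorem sub_mem_evenPart_of_mem_oddPart (hT : T.IsWF) (hd : 0 < d) (hy : y ∈ oddPart T d) :
    y - d ∈ evenPart T d := by
  have hrun := runLength_add_self hT hd (sub_mem_of_mem_oddPart hy)
  rw [sub_add_cancel] at hrun
  have hodd := hy.2
  rw [hrun, Nat.odd_add_one, Nat.not_odd_iff_even] at hodd
  exact ⟨sub_mem_of_mem_oddPart hy, hodd⟩

end Parity

section Series

variable {S : Type*} [CommSemiring S] {G : Type*} [LinearOrder G]

theorem InSeries.mono {f g : HahnSeries G S} (hf : InSeries f) (h : g.support ⊆ f.support) :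
    InSeries g := by
  obtain ⟨σ, hσ, hsub⟩ := hf
  exact ⟨σ, hσ, h.trans hsub⟩

theorem support_nontrivial_of_not_isMonomialSeries [Zero G] {p : HahnSeries G S}
    (hp : ¬IsMonomialSeries p) : p.support.Nontrivial := by
  by_contra! h
  rcases h.eq_empty_or_singleton with h | ⟨a, ha⟩
  · exact hp ⟨0, 0, by rw [single_eq_zero, ← support_eq_empty_iff, h]⟩
  · exact hp ⟨a, p.coeff a, by rw [← restrict_singleton, restrict_eq_self ha.subset]⟩

variable [AddCommGroup G] [IsOrderedAddMonoid G]

namespace HahnSeries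

variable [NoZeroDivisors S] {p q : HahnSeries G S}

theorem add_mem_support_mul (hred : AddReduced S) {a b : G} (ha : a ∈ p.support)
    (hb : b ∈ q.support) : a + b ∈ (p * q).support := by
  rw [mem_support, coeff_mul]
  exact hred.sum_ne_zero (i := (a, b)) (Finset.mem_antidiagonal.2 ⟨ha, hb, rfl⟩) (mul_ne_zero ha hb)

theorem not_isAddAtom_coeff_mul (hred : AddReduced S) {a a' b b' : G} (ha : a ∈ p.support)
    (ha' : a' ∈ p.support) (hb : b ∈ q.support) (hb' : b' ∈ q.support) (hne : a ≠ a')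
    (heq : a + b = a' + b') : ¬IsAddAtom ((p * q).coeff (a + b)) := by
  rw [coeff_mul]
  exact hred.not_isAddAtom_sum (i := (a, b)) (j := (a', b'))
    (Finset.mem_antidiagonal.2 ⟨ha, hb, rfl⟩) (Finset.mem_antidiagonal.2 ⟨ha', hb', heq.symm⟩)
    (by simp [hne]) (mul_ne_zero ha hb) (mul_ne_zero ha' hb')

end HahnSeries

namespace InSeries

variable {f : HahnSeries G S}

theorem inSeries_single (hf : InSeries f) (a : G) (r : S) : InSeries (single a r) := by
  obtain ⟨σ, hσ, -⟩ := hf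
  refine ⟨fun n => a + (σ n - σ 0), fun m n hmn => ?_, fun x hx => ⟨0, ?_⟩⟩
  · simpa using hσ hmn
  · simpa using (support_single_subset hx).symm

theorem isUnitSeries_single (hf : InSeries f) (a : G) {u : S} (hu : IsUnit u) :
    IsUnitSeries (single a u) := by
  obtain ⟨u, rfl⟩ := hu
  refine ⟨hf.inSeries_single _ _, single (-a) ↑u⁻¹, hf.inSeries_single _ _, ?_⟩
  rw [single_mul_single, add_neg_cancel, Units.mul_inv, single_zero_one]

end InSeries

theorem isUnit_of_isUnit_coeff_single_mul {a γ : G} {r : S} {q : HahnSeries G S}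
    (h : IsUnit ((single a r * q).coeff γ)) : IsUnit r := by
  rw [← sub_add_cancel γ a, coeff_single_mul_add] at h
  exact isUnit_of_mul_isUnit_left h

variable [NoZeroDivisors S]

theorem not_isUnitSeries_of_support_nontrivial (hred : AddReduced S) {f : HahnSeries G S}
    (hf : f.support.Nontrivial) : ¬IsUnitSeries f := by
  rintro ⟨-, h, -, hfh⟩
  obtain ⟨x, hx, y, hy, hxy⟩ := hf
  have : Nontrivial S := nontrivial_of_ne _ 0 hx
  obtain ⟨b, hb⟩ : h.support.Nonempty := support_nonempty_iff.2 (by rintro rfl; simp at hfh)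
  have h1 : (1 : HahnSeries G S).support ⊆ {0} := by
    rw [← single_zero_one]; exact support_single_subset
  have hx0 : x + b = 0 := h1 (hfh ▸ add_mem_support_mul hred hx hb)
  have hy0 : y + b = 0 := h1 (hfh ▸ add_mem_support_mul hred hy hb)
  exact hxy (add_right_cancel (hx0.trans hy0.symm))

theorem irreducibleSeries_of_monolithicSeries (hred : AddReduced S) {f : HahnSeries G S}
    (hf : InSeries f) (hnt : f.support.Nontrivial) (hmono : MonolithicSeries f) {γ : G}
    (hγ : IsUnit (f.coeff γ)) : IrreducibleSeries f := by
  refine ⟨hf, hmono.1, not_isUnitSeries_of_support_nontrivial hred hnt, fun p q hp hq hpq => ?_⟩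
  rcases hmono.2 p q hp hq hpq with ⟨a, r, rfl⟩ | ⟨a, r, rfl⟩
  · exact Or.inl (hp.isUnitSeries_single a (isUnit_of_isUnit_coeff_single_mul (hpq ▸ hγ)))
  · rw [hpq, mul_comm] at hγ
    exact Or.inr (hq.isUnitSeries_single a (isUnit_of_isUnit_coeff_single_mul hγ))

theorem ne_mul_of_isLowestPair (hred : AddReduced S) {f p q : HahnSeries G S}
    {e₀ e₁ a₀ a₁ b₀ b₁ : G} (hlow : IsLowestPair f.support e₀ e₁)
    (hgap : ∀ x ∈ f.support, e₁ < x → x + (e₁ - e₀) ∉ f.support)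
    (htie : IsAddAtom (f.coeff e₁) ∨ e₁ + (e₁ - e₀) ∉ f.support)
    (ha : IsLowestPair p.support a₀ a₁) (hb : IsLowestPair q.support b₀ b₁)
    (hab : a₀ + b₁ ≤ a₁ + b₀) : f ≠ p * q := by
  rintro rfl
  have he₀ : e₀ = a₀ + b₀ := by
    refine le_antisymm (hlow.le (add_mem_support_mul hred ha.left_mem hb.left_mem)) ?_
    obtain ⟨x, hx, y, hy, hxy⟩ := support_mul_subset hlow.left_mem
    rw [← hxy]
    exact add_le_add (ha.le hx) (hb.le hy)
  have he₁ : e₁ = a₀ + b₁ := by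
    refine le_antisymm (hlow.le_of_ne _ (add_mem_support_mul hred ha.left_mem hb.right_mem) ?_) ?_
    · rw [he₀]
      exact (add_lt_add_right hb.lt a₀).ne'
    · obtain ⟨x, hx, y, hy, hxy⟩ := support_mul_subset hlow.right_mem
      rw [← hxy]
      by_cases hx₀ : x = a₀
      · subst hx₀
        refine add_le_add_right (hb.le_of_ne y hy ?_) x
        rintro rfl
        exact hlow.lt.ne (he₀.trans hxy)
      · exact hab.trans (add_le_add (ha.le_of_ne x hx hx₀) (hb.le hy))
  have hfar : a₁ + b₀ + (e₁ - e₀) ∈ (p * q).support := by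
    rw [show a₁ + b₀ + (e₁ - e₀) = a₁ + b₁ by rw [he₀, he₁]; abel]
    exact add_mem_support_mul hred ha.right_mem hb.right_mem
  rcases (he₁ ▸ hab : e₁ ≤ a₁ + b₀).lt_or_eq with hlt | heq
  · exact hgap _ (add_mem_support_mul hred ha.right_mem hb.left_mem) hlt hfar
  · rw [← heq] at hfar
    refine htie.elim ?_ (· hfar)
    rw [he₁]
    exact not_isAddAtom_coeff_mul hred ha.left_mem ha.right_mem hb.right_mem hb.left_mem ha.lt.ne
      (he₁ ▸ heq)

theorem monolithicSeries_of_isLowestPair (hred : AddReduced S) {f : HahnSeries G S} {e₀ e₁ : G}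
    (hlow : IsLowestPair f.support e₀ e₁)
    (hgap : ∀ x ∈ f.support, e₁ < x → x + (e₁ - e₀) ∉ f.support)
    (htie : IsAddAtom (f.coeff e₁) ∨ e₁ + (e₁ - e₀) ∉ f.support) : MonolithicSeries f := by
  refine ⟨support_nonempty_iff.1 ⟨e₀, hlow.left_mem⟩, fun p q _ _ hpq => ?_⟩
  by_contra! h
  obtain ⟨a₀, a₁, ha⟩ :=
    p.isWF_support.exists_isLowestPair (support_nontrivial_of_not_isMonomialSeries h.1)
  obtain ⟨b₀, b₁, hb⟩ :=
    q.isWF_support.exists_isLowestPair (support_nontrivial_of_not_isMonomialSeries h.2)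
  rcases le_total (a₀ + b₁) (a₁ + b₀) with hab | hab
  · exact ne_mul_of_isLowestPair hred hlow hgap htie ha hb hab hpq
  · refine ne_mul_of_isLowestPair hred hlow hgap htie hb ha ?_ (hpq.trans (mul_comm p q))
    rwa [add_comm b₀, add_comm b₁]

theorem irreducibleSeries_single_add_single_add (hred : AddReduced S) {f g : HahnSeries G S}
    (hf : InSeries f) {m₀ m₁ : G} {r₀ r₁ : S} {W : Set G} (hm₀ : m₀ ∈ f.support)
    (hm₁ : m₁ ∈ f.support) (hW : W ⊆ f.support ∩ Set.Ioi m₁) (hlt : m₀ < m₁) (hr₀ : r₀ ≠ 0)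
    (hr₁ : r₁ ≠ 0) (hg : g.support ⊆ W) (hfree : ∀ x ∈ W, x + (m₁ - m₀) ∉ W)
    (htie : IsAddAtom r₁ ∨ m₁ + (m₁ - m₀) ∉ W) (hunit : IsUnit r₀ ∨ IsUnit r₁) :
    IrreducibleSeries (single m₀ r₀ + single m₁ r₁ + g) := by
  set F := single m₀ r₀ + single m₁ r₁ + g
  have hgt : ∀ y ∈ W, m₁ < y := fun y hy => (hW hy).2
  have hg₀ : g.coeff m₀ = 0 := by_contra fun h => (hlt.trans (hgt _ (hg h))).false
  have hg₁ : g.coeff m₁ = 0 := by_contra fun h => (hgt _ (hg h)).false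
  have hc₀ : F.coeff m₀ = r₀ := by simp [F, hlt.ne, hg₀]
  have hc₁ : F.coeff m₁ = r₁ := by simp [F, hlt.ne', hg₁]
  have hsupp : F.support ⊆ insert m₀ (insert m₁ W) := by
    intro x hx
    by_cases h₀ : x = m₀
    · exact Or.inl h₀
    by_cases h₁ : x = m₁
    · exact Or.inr (Or.inl h₁)
    refine Or.inr (Or.inr (hg ?_))
    simpa [F, mem_support, coeff_single_of_ne h₀, coeff_single_of_ne h₁] using hx
  have hmem_W : ∀ x ∈ F.support, m₁ < x → x ∈ W := fun x hx hx₁ =>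
    ((hsupp hx).resolve_left (hlt.trans hx₁).ne').resolve_left hx₁.ne'
  have hm₀F : m₀ ∈ F.support := by rwa [mem_support, hc₀]
  have hm₁F : m₁ ∈ F.support := by rwa [mem_support, hc₁]
  have hlow : IsLowestPair F.support m₀ m₁ := .of_subset_insert hm₀F hm₁F hlt hsupp hgt
  have hgap : ∀ x ∈ F.support, m₁ < x → x + (m₁ - m₀) ∉ F.support := fun x hx hx₁ hxd =>
    hfree x (hmem_W x hx hx₁) <|
      hmem_W _ hxd (hx₁.trans (lt_add_of_pos_right x (sub_pos.2 hlt)))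
  have htie' : IsAddAtom (F.coeff m₁) ∨ m₁ + (m₁ - m₀) ∉ F.support := by
    refine hc₁ ▸ htie.imp_right fun hn hd => hn (hmem_W _ hd ?_)
    exact lt_add_of_pos_right m₁ (sub_pos.2 hlt)
  obtain ⟨γ, hγ⟩ : ∃ γ, IsUnit (F.coeff γ) :=
    hunit.elim (fun hu => ⟨m₀, hc₀ ▸ hu⟩) fun hu => ⟨m₁, hc₁ ▸ hu⟩
  refine irreducibleSeries_of_monolithicSeries hred (hf.mono fun x hx => ?_)
    ⟨m₀, hm₀F, m₁, hm₁F, hlt.ne⟩ (monolithicSeries_of_isLowestPair hred hlow hgap htie') hγ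
  rcases hsupp hx with rfl | rfl | hxW
  exacts [hm₀, hm₁, (hW hxW).1]

end Series

section Decomposition

variable {S : Type*} [CommSemiring S] {G : Type*} [AddCommGroup G] [LinearOrder G]
  {f : HahnSeries G S} {e₀ e₁ : G}

theorem IsLowestPair.eq_add_restrict_evenPart_add_restrict_oddPart
    (hlow : IsLowestPair f.support e₀ e₁) (d : G) :
    f = single e₀ (f.coeff e₀) + single e₁ (f.coeff e₁) +
      f.restrict (evenPart (f.support ∩ Set.Ioi e₁) d) +
        f.restrict (oddPart (f.support ∩ Set.Ioi e₁) d) := by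
  rw [add_assoc _ (f.restrict _), ← restrict_union disjoint_evenPart_oddPart,
    evenPart_union_oddPart]
  exact hlow.eq_single_add_single_add_restrict

variable [IsOrderedAddMonoid G]

def IsSumOfTwoIrreducibles (f : HahnSeries G S) : Prop :=
  ∃ A B : HahnSeries G S, IrreducibleSeries A ∧ IrreducibleSeries B ∧ f = A + B

variable [NoZeroDivisors S]

theorem irreducibleSeries_of_oddPart_eq_empty (hred : AddReduced S)
    (hatoms : ∀ a : S, IsUnit a → IsAddAtom a) (hf : InSeries f)
    (hlow : IsLowestPair f.support e₀ e₁) (hO : oddPart (f.support ∩ Set.Ioi e₁) (e₁ - e₀) = ∅)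
    (htie : IsUnit (f.coeff e₁) ∨ e₁ + (e₁ - e₀) ∉ f.support)
    (hunit : IsUnit (f.coeff e₀) ∨ IsUnit (f.coeff e₁)) : IrreducibleSeries f := by
  have hT : (f.support ∩ Set.Ioi e₁).IsWF := f.isWF_support.mono Set.inter_subset_left
  rw [hlow.eq_add_restrict_evenPart_add_restrict_oddPart (e₁ - e₀), hO, restrict_empty, add_zero]
  exact irreducibleSeries_single_add_single_add hred hf hlow.left_mem hlow.right_mem
    evenPart_subset hlow.lt hlow.left_mem hlow.right_mem support_restrict_subset
    (fun x hx => add_notMem_evenPart hT (sub_pos.2 hlow.lt) hx)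
    (htie.imp (hatoms _) fun h hm => h (evenPart_subset hm).1) hunit

theorem isSumOfTwoIrreducibles_of_oddPart_nonempty (hred : AddReduced S)
    (hfur : AddFurstenberg S) (hatoms : ∀ a : S, IsAddAtom a ↔ IsUnit a) (hf : InSeries f)
    (hlow : IsLowestPair f.support e₀ e₁)
    (hO : (oddPart (f.support ∩ Set.Ioi e₁) (e₁ - e₀)).Nonempty)
    (htie : IsUnit (f.coeff e₁) ∨ e₁ + (e₁ - e₀) ∉ f.support)
    (hunit : IsUnit (f.coeff e₀) ∨ IsUnit (f.coeff e₁)) : IsSumOfTwoIrreducibles f := by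
  set T := f.support ∩ Set.Ioi e₁
  set d := e₁ - e₀
  have hT : T.IsWF := f.isWF_support.mono Set.inter_subset_left
  have hd : 0 < d := sub_pos.2 hlow.lt
  have : Nontrivial S := nontrivial_of_ne _ 0 hlow.left_mem
  have hOwf : (oddPart T d).IsWF := hT.mono oddPart_subset
  set z' := hOwf.min hO
  have hz'O : z' ∈ oddPart T d := hOwf.min_mem hO
  set z := z' - d
  have hzE : z ∈ evenPart T d := sub_mem_evenPart_of_mem_oddPart hT hd hz'O
  have hz'z : z' - z = d := sub_sub_cancel z' d
  obtain ⟨u, t, hu, hct⟩ := exists_isUnit_add hfur (fun a => (hatoms a).1) (evenPart_subset hzE).1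
  refine ⟨single e₀ (f.coeff e₀) + single e₁ (f.coeff e₁) +
      (single z t + f.restrict (evenPart T d \ {z})),
    single z u + single z' (f.coeff z') + f.restrict (oddPart T d \ {z'}), ?_, ?_, ?_⟩
  · exact irreducibleSeries_single_add_single_add hred hf hlow.left_mem hlow.right_mem
      evenPart_subset hlow.lt hlow.left_mem hlow.right_mem
      (support_single_add_restrict_diff_subset hzE t) (fun x hx => add_notMem_evenPart hT hd hx)
      (htie.imp (hatoms _).2 fun h hm => h (evenPart_subset hm).1) hunit
  · refine irreducibleSeries_single_add_single_add hred hf (evenPart_subset hzE).1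
      (oddPart_subset hz'O).1 (fun y hy => ⟨(oddPart_subset hy.1).1, ?_⟩) (sub_lt_self z' hd)
      hu.ne_zero (oddPart_subset hz'O).1 support_restrict_subset ?_ ?_ (Or.inl hu)
    · exact lt_of_le_of_ne (hOwf.min_le hO hy.1) (Ne.symm hy.2)
    · rw [hz'z]
      exact fun x hx hxd => add_notMem_oddPart hT hd hx.1 hxd.1
    · rw [hz'z]
      exact Or.inr fun h => add_notMem_oddPart hT hd hz'O h.1
  · refine (hlow.eq_add_restrict_evenPart_add_restrict_oddPart d).trans ?_
    rw [restrict_eq_single_add_restrict_diff hzE, restrict_eq_single_add_restrict_diff hz'O, hct,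
      single_add]
    abel

theorem isSumOfTwoIrreducibles_of_not_isUnit (hred : AddReduced S) (hfur : AddFurstenberg S)
    (hatoms : ∀ a : S, IsAddAtom a ↔ IsUnit a) (hf : InSeries f)
    (hlow : IsLowestPair f.support e₀ e₁) (h₀ : ¬IsUnit (f.coeff e₀))
    (h₁ : ¬IsUnit (f.coeff e₁)) : IsSumOfTwoIrreducibles f := by
  set T := f.support ∩ Set.Ioi e₁
  set d := e₁ - e₀
  have hT : T.IsWF := f.isWF_support.mono Set.inter_subset_left
  have hd : 0 < d := sub_pos.2 hlow.lt
  obtain ⟨u₀, t₀, hu₀, ht₀, hc₀⟩ :=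
    exists_isUnit_add_ne_zero hred hfur (fun a => (hatoms a).1) hlow.left_mem h₀
  obtain ⟨u₁, t₁, hu₁, ht₁, hc₁⟩ :=
    exists_isUnit_add_ne_zero hred hfur (fun a => (hatoms a).1) hlow.right_mem h₁
  have : Nontrivial S := nontrivial_of_ne _ 0 ht₀
  refine ⟨single e₀ t₀ + single e₁ u₁ + f.restrict (evenPart T d),
    single e₀ u₀ + single e₁ t₁ + f.restrict (oddPart T d), ?_, ?_, ?_⟩
  · exact irreducibleSeries_single_add_single_add hred hf hlow.left_mem hlow.right_mem
      evenPart_subset hlow.lt ht₀ hu₁.ne_zero support_restrict_subset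
      (fun x hx => add_notMem_evenPart hT hd hx) (Or.inl ((hatoms _).2 hu₁)) (Or.inr hu₁)
  · refine irreducibleSeries_single_add_single_add hred hf hlow.left_mem hlow.right_mem
      oddPart_subset hlow.lt hu₀.ne_zero ht₁ support_restrict_subset
      (fun x hx => add_notMem_oddPart hT hd hx) (Or.inr fun h => ?_) (Or.inl hu₀)
    exact lt_irrefl e₁ (by simpa [d] using (sub_mem_of_mem_oddPart h).2)
  · refine (hlow.eq_add_restrict_evenPart_add_restrict_oddPart d).trans ?_
    rw [hc₀, hc₁, single_add, single_add]
    abel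

theorem isSumOfTwoIrreducibles_of_isUnit_coeff (hred : AddReduced S) (hfur : AddFurstenberg S)
    (hatoms : ∀ a : S, IsAddAtom a ↔ IsUnit a) (hf : InSeries f)
    (hlow : IsLowestPair f.support e₀ e₁) (h₀ : IsUnit (f.coeff e₀))
    (h₁ : ¬IsUnit (f.coeff e₁)) (hz : e₁ + (e₁ - e₀) ∈ f.support) :
    IsSumOfTwoIrreducibles f := by
  set T := f.support ∩ Set.Ioi e₁
  set d := e₁ - e₀
  have hT : T.IsWF := f.isWF_support.mono Set.inter_subset_left
  have hd : 0 < d := sub_pos.2 hlow.lt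
  set z := e₁ + d
  have hzE : z ∈ evenPart T d :=
    mem_evenPart_of_sub_notMem ⟨hz, lt_add_of_pos_right e₁ hd⟩ (by simp [z, T])
  obtain ⟨v, t₁, hv, ht₁, hc₁⟩ :=
    exists_isUnit_add_ne_zero hred hfur (fun a => (hatoms a).1) hlow.right_mem h₁
  obtain ⟨u, t, hu, hct⟩ := exists_isUnit_add hfur (fun a => (hatoms a).1) hz
  have : Nontrivial S := nontrivial_of_ne _ 0 ht₁
  refine ⟨single e₀ (f.coeff e₀) + single e₁ v + (single z t + f.restrict (evenPart T d \ {z})),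
    single e₁ t₁ + single z u + f.restrict (oddPart T d), ?_, ?_, ?_⟩
  · exact irreducibleSeries_single_add_single_add hred hf hlow.left_mem hlow.right_mem
      evenPart_subset hlow.lt hlow.left_mem hv.ne_zero
      (support_single_add_restrict_diff_subset hzE t)
      (fun x hx => add_notMem_evenPart hT hd hx) (Or.inl ((hatoms _).2 hv)) (Or.inl h₀)
  · have hzd : z - e₁ = d := add_sub_cancel_left e₁ d
    refine irreducibleSeries_single_add_single_add hred hf hlow.right_mem hz
      (fun y hy => ⟨(oddPart_subset hy).1, lt_sub_iff_add_lt.1 (sub_mem_of_mem_oddPart hy).2⟩)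
      (lt_add_of_pos_right e₁ hd) ht₁ hu.ne_zero support_restrict_subset ?_
      (Or.inl ((hatoms _).2 hu)) (Or.inr hu)
    rw [hzd]
    exact fun x hx => add_notMem_oddPart hT hd hx
  · refine (hlow.eq_add_restrict_evenPart_add_restrict_oddPart d).trans ?_
    rw [restrict_eq_single_add_restrict_diff hzE, hc₁, hct, single_add, single_add]
    abel

end Decomposition

theorem weak_goldbach_series_general
    {S : Type*} [CommSemiring S] {G : Type*} [AddCommGroup G] [LinearOrder G] [IsOrderedAddMonoid G]
    (hS : IsSemidomain S) (hred : AddReduced S) (hfur : AddFurstenberg S)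
    (hatoms : ∀ a : S, IsAddAtom a ↔ IsUnit a)
    (f : HahnSeries G S) (hin : InSeries f) (hsupp : f.support.Nontrivial) :
    ∃ (k : ℕ) (p : Fin k → HahnSeries G S),
      k ≤ 3 ∧ (∀ i, IrreducibleSeries (p i)) ∧ f = ∑ i, p i := by
  have := hS.noZeroDivisors
  obtain ⟨e₀, e₁, hlow⟩ := f.isWF_support.exists_isLowestPair hsupp
  suffices h : IrreducibleSeries f ∨ IsSumOfTwoIrreducibles f by
    rcases h with hf | ⟨A, B, hA, hB, rfl⟩
    · exact ⟨1, ![f], by norm_num, fun i => by fin_cases i; exact hf, by simp⟩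
    · refine ⟨2, ![A, B], by norm_num, fun i => ?_, by simp [Fin.sum_univ_two]⟩
      fin_cases i
      exacts [hA, hB]
  have hsplit_by_oddPart (htie : IsUnit (f.coeff e₁) ∨ e₁ + (e₁ - e₀) ∉ f.support)
      (hunit : IsUnit (f.coeff e₀) ∨ IsUnit (f.coeff e₁)) :
      IrreducibleSeries f ∨ IsSumOfTwoIrreducibles f :=
    (oddPart (f.support ∩ Set.Ioi e₁) (e₁ - e₀)).eq_empty_or_nonempty.imp
      (irreducibleSeries_of_oddPart_eq_empty hred (fun a => (hatoms a).2) hin hlow · htie hunit)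
      (isSumOfTwoIrreducibles_of_oddPart_nonempty hred hfur hatoms hin hlow · htie hunit)
  by_cases h₁ : IsUnit (f.coeff e₁)
  · exact hsplit_by_oddPart (Or.inl h₁) (Or.inr h₁)
  by_cases h₀ : IsUnit (f.coeff e₀)
  · by_cases hz : e₁ + (e₁ - e₀) ∈ f.support
    · exact Or.inr (isSumOfTwoIrreducibles_of_isUnit_coeff hred hfur hatoms hin hlow h₀ h₁ hz)
    · exact hsplit_by_oddPart (Or.inr hz) (Or.inl h₀)
  · exact Or.inr (isSumOfTwoIrreducibles_of_not_isUnit hred hfur hatoms hin hlow h₀ h₁)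

/-- Weak Goldbach for group series semidomains: if `S` is additively reduced, additively
Furstenberg with `A₊(S) = S^×`, and every bounded-below subset of `G` is well-ordered, then
every `f ∈ S⟦G⟧` with more than one term is a sum of at most three irreducibles of `S⟦G⟧`. -/
theorem weak_goldbach_series
    {S : Type*} [CommSemiring S] {G : Type*} [AddCommGroup G] [LinearOrder G] [IsOrderedAddMonoid G]
    (hS : IsSemidomain S) (hred : AddReduced S) (hfur : AddFurstenberg S)
    (hatoms : ∀ a : S, IsAddAtom a ↔ IsUnit a)
    (hwo : ∀ A : Set G, BddBelow A → A.IsWF)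
    (f : HahnSeries G S) (hin : InSeries f) (hsupp : f.support.Nontrivial) :
    ∃ (k : ℕ) (p : Fin k → HahnSeries G S),
      k ≤ 3 ∧ (∀ i, IrreducibleSeries (p i)) ∧ f = ∑ i, p i :=
  weak_goldbach_series_general hS hred hfur hatoms f hin hsupp
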